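/- arXiv:1909.10106 — 3 statements merged into one kernel-verified Lean document; each statement's English description precedes it below -/
import Mathlib

section
/- Given any initial time t₀, final time t_f with t₀ < t_f, initial position p₀, initial speed v₀, and final position p_f, there exist unique constants a, c such that the trajectory with u(t) = a·t + c, v(t) = (1/2)·a·t² + c·t + v₀ - ((1/2)·a·t₀² + c·t₀), p(t) determined by integrating v from p(t₀) = p₀, satisfies p(t_f) = p_f and u(t_f) = 0. -/
lemma integral_quadratic (A B C x y : ℝ) :
    ∫ t in x..y, (A * t ^ 2 + B * t + C) =
      A * (y ^ 3 - x ^ 3) / 3 + B * (y ^ 2 - x ^ 2) / 2 + C * (y - x) := by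
  have hint {f : ℝ → ℝ} (hf : Continuous f) : IntervalIntegrable f MeasureTheory.volume x y :=
    hf.intervalIntegrable x y
  rw [intervalIntegral.integral_add (hint (by fun_prop)) (hint (by fun_prop)),
    intervalIntegral.integral_add (hint (by fun_prop)) (hint (by fun_prop)),
    intervalIntegral.integral_const_mul, intervalIntegral.integral_const_mul,
    integral_pow, integral_id, intervalIntegral.integral_const, smul_eq_mul]
  ring

/-- With `c = -a t_f` the speed gained is `a (s² / 2 - d s)` at time `t₀ + s`, where
`d = t_f - t₀`; its integral over `[0, d]` is `-a d³ / 3`. -/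
lemma integral_speed_of_terminal_control_eq_zero {a c t₀ t_f : ℝ} (v₀ : ℝ)
    (hc : a * t_f + c = 0) :
    ∫ t in t₀..t_f, ((1/2) * a * t ^ 2 + c * t + (v₀ - ((1/2) * a * t₀ ^ 2 + c * t₀))) =
      v₀ * (t_f - t₀) - a * (t_f - t₀) ^ 3 / 3 := by
  rw [integral_quadratic, eq_neg_of_add_eq_zero_right hc]
  ring

theorem stmt_1 (t₀ t_f p₀ v₀ p_f : ℝ) (h : t₀ < t_f) :
    ∃! ac : ℝ × ℝ,
      (ac.1 * t_f + ac.2 = 0) ∧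
      (p₀ + ∫ t in t₀..t_f,
          ((1/2) * ac.1 * t^2 + ac.2 * t +
            (v₀ - ((1/2) * ac.1 * t₀^2 + ac.2 * t₀))) = p_f) := by
  have hd : (t_f - t₀) ^ 3 ≠ 0 := pow_ne_zero 3 (sub_ne_zero.2 h.ne')
  set a := 3 * (p₀ + v₀ * (t_f - t₀) - p_f) / (t_f - t₀) ^ 3
  have ha : a * (t_f - t₀) ^ 3 = 3 * (p₀ + v₀ * (t_f - t₀) - p_f) := div_mul_cancel₀ _ hd
  refine ⟨(a, -a * t_f), ⟨by ring, ?_⟩, ?_⟩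
  · rw [integral_speed_of_terminal_control_eq_zero v₀ (by ring)]
    linarith
  · rintro ⟨a', c'⟩ ⟨hc, hp⟩
    rw [integral_speed_of_terminal_control_eq_zero v₀ hc] at hp
    obtain rfl : a' = a := mul_right_cancel₀ hd (by linarith)
    obtain rfl : c' = -a * t_f := by simp only at hc; linarith
    rfl
end

section
/- Among all twice continuously differentiable trajectories p : [t₀, t_f] → ℝ satisfying p(t₀) = p₀, p'(t₀) = v₀, p(t_f) = p_f, the functional J(p) = (1/2)∫_{t₀}^{t_f} (p''(t))² dt is minimized by the unique cubic polynomial trajectory whose second derivative is affine in t and vanishes at t_f. -/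
/-- Admissibility: `q` is C² on `[t₀, t_f]` and meets the boundary conditions
`q(t₀) = p₀`, `q'(t₀) = v₀`, `q(t_f) = p_f`. -/
def Admissible (t₀ t_f p₀ v₀ p_f : ℝ) (q : ℝ → ℝ) : Prop :=
  ContDiffOn ℝ 2 q (Set.Icc t₀ t_f) ∧
  q t₀ = p₀ ∧ derivWithin q (Set.Icc t₀ t_f) t₀ = v₀ ∧ q t_f = p_f

/-- The cost functional: half the integral of the squared acceleration. -/
noncomputable def Cost (t₀ t_f : ℝ) (q : ℝ → ℝ) : ℝ :=
  (1/2) * ∫ t in t₀..t_f,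
    (derivWithin (derivWithin q (Set.Icc t₀ t_f)) (Set.Icc t₀ t_f) t)^2

/-- `p` is the optimal cubic trajectory: admissible, second derivative affine
    in `t` and vanishing at `t_f`, and minimizing the cost among admissible
    trajectories. -/
def IsOptimalCubic (t₀ t_f p₀ v₀ p_f : ℝ) (p : ℝ → ℝ) : Prop :=
  Admissible t₀ t_f p₀ v₀ p_f p ∧
  (∃ a c : ℝ,
    (∀ t ∈ Set.Icc t₀ t_f,
      derivWithin (derivWithin p (Set.Icc t₀ t_f)) (Set.Icc t₀ t_f) t = a * t + c) ∧
    a * t_f + c = 0) ∧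
  (∀ q : ℝ → ℝ, Admissible t₀ t_f p₀ v₀ p_f q →
    Cost t₀ t_f p ≤ Cost t₀ t_f q)

/-! If `p'' = c (t - t_f)` and `w = q - p` satisfies `w(t₀) = w'(t₀) = w(t_f) = 0`, two
integrations by parts give `∫ p'' w'' = c [(t - t_f) w' - w]_{t₀}^{t_f} = 0`, hence
`J(q) = J(p) + J(q - p) ≥ J(p)`. Another minimizer `p'` then has `J(p' - p) = 0`, so
`(p' - p)'' = 0`, and the initial conditions force `p' = p` on `[t₀, t_f]`. A cubic with such
an acceleration and the prescribed data exists: one linear equation fixes `c`. -/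

open Set MeasureTheory Topology

section Interval

variable {a b : ℝ} {f g : ℝ → ℝ}

lemma contDiffOn_derivWithin_Icc (hab : a < b) (hf : ContDiffOn ℝ 2 f (Icc a b)) :
    ContDiffOn ℝ 1 (derivWithin f (Icc a b)) (Icc a b) :=
  hf.derivWithin (uniqueDiffOn_Icc hab) (by norm_num)

lemma continuousOn_derivWithin_derivWithin_Icc (hab : a < b)
    (hf : ContDiffOn ℝ 2 f (Icc a b)) :
    ContinuousOn (derivWithin (derivWithin f (Icc a b)) (Icc a b)) (Icc a b) :=
  ((contDiffOn_derivWithin_Icc hab hf).derivWithin (uniqueDiffOn_Icc hab)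
    (by norm_num : (0 : WithTop ℕ∞) + 1 ≤ 1)).continuousOn

lemma derivWithin_sub_Icc (hf : ContDiffOn ℝ 2 f (Icc a b))
    (hg : ContDiffOn ℝ 2 g (Icc a b)) :
    EqOn (derivWithin (f - g) (Icc a b))
      (derivWithin f (Icc a b) - derivWithin g (Icc a b)) (Icc a b) := fun _ ht =>
  derivWithin_sub (hf.differentiableOn two_ne_zero _ ht) (hg.differentiableOn two_ne_zero _ ht)

lemma derivWithin_derivWithin_sub_Icc (hab : a < b) (hf : ContDiffOn ℝ 2 f (Icc a b))
    (hg : ContDiffOn ℝ 2 g (Icc a b)) :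
    EqOn (derivWithin (derivWithin (f - g) (Icc a b)) (Icc a b))
      (derivWithin (derivWithin f (Icc a b)) (Icc a b) -
        derivWithin (derivWithin g (Icc a b)) (Icc a b)) (Icc a b) := fun t ht => by
  rw [derivWithin_congr (derivWithin_sub_Icc hf hg) (derivWithin_sub_Icc hf hg ht)]
  exact derivWithin_sub
    ((contDiffOn_derivWithin_Icc hab hf).differentiableOn one_ne_zero _ ht)
    ((contDiffOn_derivWithin_Icc hab hg).differentiableOn one_ne_zero _ ht)

theorem integral_sub_mul_derivWithin_derivWithin (hab : a < b)
    (hf : ContDiffOn ℝ 2 f (Icc a b)) :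
    ∫ t in a..b, (t - b) * derivWithin (derivWithin f (Icc a b)) (Icc a b) t =
      (b - a) * derivWithin f (Icc a b) a + f a - f b := by
  set f' := derivWithin f (Icc a b)
  set f'' := derivWithin f' (Icc a b)
  have hf' := contDiffOn_derivWithin_Icc hab hf
  have hF : ContinuousOn (fun t => (t - b) * f' t - f t) (Icc a b) := by
    have := hf'.continuousOn; have := hf.continuousOn; fun_prop
  have hderiv : ∀ x ∈ Ioo a b,
      HasDerivWithinAt (fun t => (t - b) * f' t - f t) ((x - b) * f'' x) (Ioi x) x := by
    intro x hx
    have hS : Icc a b ∈ 𝓝 x := Icc_mem_nhds hx.1 hx.2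
    have hf1 : HasDerivAt f (f' x) x :=
      (hf.differentiableOn two_ne_zero x (Ioo_subset_Icc_self hx)).hasDerivWithinAt.hasDerivAt hS
    have hf2 : HasDerivAt f' (f'' x) x :=
      (hf'.differentiableOn one_ne_zero x (Ioo_subset_Icc_self hx)).hasDerivWithinAt.hasDerivAt hS
    have := (((hasDerivAt_id x).sub_const b).mul hf2).sub hf1
    exact (this.congr_deriv (by simp)).hasDerivWithinAt
  have hint : IntervalIntegrable (fun t => (t - b) * f'' t) volume a b := by
    have := continuousOn_derivWithin_derivWithin_Icc hab hf
    exact ContinuousOn.intervalIntegrable_of_Icc hab.le (by fun_prop)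
  rw [intervalIntegral.integral_eq_sub_of_hasDeriv_right_of_le hab.le hF hderiv hint]
  ring

lemma eqOn_zero_of_integral_sq_eq_zero (hab : a < b)
    (hf : ContinuousOn f (Icc a b)) (h : ∫ t in a..b, f t ^ 2 = 0) : EqOn f 0 (Icc a b) := by
  have hae : (fun t => f t ^ 2) =ᵐ[volume.restrict (Icc a b)] 0 := by
    rw [← Measure.restrict_congr_set Ioc_ae_eq_Icc]
    exact (intervalIntegral.integral_eq_zero_iff_of_le_of_nonneg_ae hab.le
      (.of_forall fun t => sq_nonneg (f t)) ((hf.pow 2).intervalIntegrable_of_Icc hab.le)).1 h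
  intro t ht
  simpa using Measure.eqOn_Icc_of_ae_eq volume hab.ne hae (hf.pow 2) continuousOn_const ht

end Interval

section Cost

variable {t₀ t_f p₀ v₀ p_f : ℝ}

lemma cost_nonneg (h : t₀ ≤ t_f) (q : ℝ → ℝ) : 0 ≤ Cost t₀ t_f q :=
  mul_nonneg (by norm_num) (intervalIntegral.integral_nonneg h fun _ _ => sq_nonneg _)

theorem Admissible.sub (h : t₀ < t_f) {p q : ℝ → ℝ} (hq : Admissible t₀ t_f p₀ v₀ p_f q)
    (hp : Admissible t₀ t_f p₀ v₀ p_f p) : Admissible t₀ t_f 0 0 0 (q - p) := by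
  obtain ⟨hq, hq₀, hqv₀, hqf⟩ := hq
  obtain ⟨hp, hp₀, hpv₀, hpf⟩ := hp
  refine ⟨hq.sub hp, by simp [hq₀, hp₀], ?_, by simp [hqf, hpf]⟩
  rw [derivWithin_sub_Icc hq hp (left_mem_Icc.2 h.le), Pi.sub_apply, hqv₀, hpv₀, sub_self]

theorem cost_eq_cost_add_cost_sub (h : t₀ < t_f) {p q : ℝ → ℝ} {c : ℝ}
    (hp : Admissible t₀ t_f p₀ v₀ p_f p) (hq : Admissible t₀ t_f p₀ v₀ p_f q)
    (hp'' : ∀ t ∈ Icc t₀ t_f,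
      derivWithin (derivWithin p (Icc t₀ t_f)) (Icc t₀ t_f) t = c * (t - t_f)) :
    Cost t₀ t_f q = Cost t₀ t_f p + Cost t₀ t_f (q - p) := by
  obtain ⟨hw, hw₀, hw₁, hwf⟩ := hq.sub h hp
  have hcross : ∫ t in t₀..t_f,
      (t - t_f) * derivWithin (derivWithin (q - p) (Icc t₀ t_f)) (Icc t₀ t_f) t = 0 := by
    rw [integral_sub_mul_derivWithin_derivWithin h hw, hw₀, hw₁, hwf]
    ring
  have hdiff := derivWithin_derivWithin_sub_Icc h hq.1 hp.1
  set q'' := derivWithin (derivWithin q (Icc t₀ t_f)) (Icc t₀ t_f)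
  set p'' := derivWithin (derivWithin p (Icc t₀ t_f)) (Icc t₀ t_f)
  set w'' := derivWithin (derivWithin (q - p) (Icc t₀ t_f)) (Icc t₀ t_f)
  have hsplit : ∫ t in t₀..t_f, q'' t ^ 2 =
      ∫ t in t₀..t_f, (p'' t ^ 2 + w'' t ^ 2 + 2 * c * ((t - t_f) * w'' t)) := by
    refine intervalIntegral.integral_congr fun t ht => ?_
    rw [uIcc_of_le h.le] at ht
    have hq'' : q'' t = p'' t + w'' t := by linarith [hdiff ht, Pi.sub_apply q'' p'' t]
    rw [hq'', hp'' t ht]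
    ring
  have hw'' := continuousOn_derivWithin_derivWithin_Icc h hw
  have hp''c := continuousOn_derivWithin_derivWithin_Icc h hp.1
  have hi₁ : IntervalIntegrable (fun t => p'' t ^ 2) volume t₀ t_f :=
    (hp''c.pow 2).intervalIntegrable_of_Icc h.le
  have hi₂ : IntervalIntegrable (fun t => w'' t ^ 2) volume t₀ t_f :=
    (hw''.pow 2).intervalIntegrable_of_Icc h.le
  have hi₃ : IntervalIntegrable (fun t => 2 * c * ((t - t_f) * w'' t)) volume t₀ t_f :=
    ContinuousOn.intervalIntegrable_of_Icc h.le (by fun_prop)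
  unfold Cost
  rw [hsplit, intervalIntegral.integral_add (hi₁.add hi₂) hi₃,
    intervalIntegral.integral_add hi₁ hi₂, intervalIntegral.integral_const_mul, hcross]
  ring

lemma eqOn_zero_of_cost_eq_zero {w : ℝ → ℝ} (h : t₀ < t_f)
    (hw : ContDiffOn ℝ 2 w (Icc t₀ t_f)) (h₀ : w t₀ = 0) (h₁ : derivWithin w (Icc t₀ t_f) t₀ = 0)
    (hcost : Cost t₀ t_f w = 0) : EqOn w 0 (Icc t₀ t_f) := by
  have hw' := contDiffOn_derivWithin_Icc h hw
  have hw'' : EqOn (derivWithin (derivWithin w (Icc t₀ t_f)) (Icc t₀ t_f)) 0 (Icc t₀ t_f) :=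
    eqOn_zero_of_integral_sq_eq_zero h (continuousOn_derivWithin_derivWithin_Icc h hw)
      (by unfold Cost at hcost; linarith)
  have hw'0 : EqOn (derivWithin w (Icc t₀ t_f)) 0 (Icc t₀ t_f) := fun t ht => by
    rw [constant_of_derivWithin_zero (hw'.differentiableOn one_ne_zero)
      (fun x hx => hw'' (Ico_subset_Icc_self hx)) t ht, h₁, Pi.zero_apply]
  intro t ht
  rw [constant_of_derivWithin_zero (hw.differentiableOn two_ne_zero)
    (fun x hx => hw'0 (Ico_subset_Icc_self hx)) t ht, h₀, Pi.zero_apply]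

end Cost

section Cubic

variable {t₀ t_f p₀ v₀ p_f c : ℝ}

noncomputable def cubicTrajectory (t₀ t_f p₀ v₀ c : ℝ) (t : ℝ) : ℝ :=
  p₀ + v₀ * (t - t₀) + c * ((t - t₀) ^ 3 / 6 - (t_f - t₀) * (t - t₀) ^ 2 / 2)

lemma hasDerivAt_cubicTrajectory (t : ℝ) :
    HasDerivAt (cubicTrajectory t₀ t_f p₀ v₀ c)
      (v₀ + c * ((t - t₀) ^ 2 / 2 - (t_f - t₀) * (t - t₀))) t := by
  have hs := (hasDerivAt_id t).sub_const t₀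
  have := ((hs.const_mul v₀).const_add p₀).add
    ((((hs.pow 3).div_const 6).sub (((hs.pow 2).const_mul (t_f - t₀)).div_const 2)).const_mul c)
  exact this.congr_deriv (by simp only [id, Nat.cast_ofNat]; ring)

lemma hasDerivAt_deriv_cubicTrajectory (t : ℝ) :
    HasDerivAt (fun t => v₀ + c * ((t - t₀) ^ 2 / 2 - (t_f - t₀) * (t - t₀)))
      (c * (t - t_f)) t := by
  have hs := (hasDerivAt_id t).sub_const t₀
  have := (((hs.pow 2).div_const 2).sub (hs.const_mul (t_f - t₀))).const_mul c |>.const_add v₀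
  exact this.congr_deriv (by simp only [id, Nat.cast_ofNat]; ring)

lemma derivWithin_derivWithin_cubicTrajectory (h : t₀ < t_f) {t : ℝ} (ht : t ∈ Icc t₀ t_f) :
    derivWithin (derivWithin (cubicTrajectory t₀ t_f p₀ v₀ c) (Icc t₀ t_f)) (Icc t₀ t_f) t =
      c * (t - t_f) := by
  have hderiv : EqOn (derivWithin (cubicTrajectory t₀ t_f p₀ v₀ c) (Icc t₀ t_f))
      (fun t => v₀ + c * ((t - t₀) ^ 2 / 2 - (t_f - t₀) * (t - t₀))) (Icc t₀ t_f) := fun t ht =>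
    (hasDerivAt_cubicTrajectory t).hasDerivWithinAt.derivWithin (uniqueDiffOn_Icc h t ht)
  rw [derivWithin_congr hderiv (hderiv ht)]
  exact (hasDerivAt_deriv_cubicTrajectory t).hasDerivWithinAt.derivWithin
    (uniqueDiffOn_Icc h t ht)

/-- With `T = t_f - t₀` the cubic ends at `p₀ + v₀ T - c T³ / 3`; this `c` makes that `p_f`. -/
lemma admissible_cubicTrajectory (h : t₀ < t_f) :
    Admissible t₀ t_f p₀ v₀ p_f
      (cubicTrajectory t₀ t_f p₀ v₀ (3 * (p₀ + v₀ * (t_f - t₀) - p_f) / (t_f - t₀) ^ 3)) := by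
  refine ⟨?_, by simp [cubicTrajectory], ?_, ?_⟩
  · unfold cubicTrajectory; fun_prop
  · rw [(hasDerivAt_cubicTrajectory t₀).hasDerivWithinAt.derivWithin
      (uniqueDiffOn_Icc h t₀ (left_mem_Icc.2 h.le))]
    simp
  · have : t_f - t₀ ≠ 0 := sub_ne_zero.2 h.ne'
    unfold cubicTrajectory
    field_simp
    ring

end Cubic

theorem stmt_2 (t₀ t_f p₀ v₀ p_f : ℝ) (h : t₀ < t_f) :
    ∃ p : ℝ → ℝ, IsOptimalCubic t₀ t_f p₀ v₀ p_f p ∧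
      ∀ p' : ℝ → ℝ, IsOptimalCubic t₀ t_f p₀ v₀ p_f p' →
        Set.EqOn p' p (Set.Icc t₀ t_f) := by
  set c := 3 * (p₀ + v₀ * (t_f - t₀) - p_f) / (t_f - t₀) ^ 3
  set P := cubicTrajectory t₀ t_f p₀ v₀ c
  have hP : Admissible t₀ t_f p₀ v₀ p_f P := admissible_cubicTrajectory h
  have hP'' : ∀ t ∈ Icc t₀ t_f,
      derivWithin (derivWithin P (Icc t₀ t_f)) (Icc t₀ t_f) t = c * (t - t_f) :=
    fun t ht => derivWithin_derivWithin_cubicTrajectory h ht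
  have hsplit (q : ℝ → ℝ) (hq : Admissible t₀ t_f p₀ v₀ p_f q) :
      Cost t₀ t_f q = Cost t₀ t_f P + Cost t₀ t_f (q - P) :=
    cost_eq_cost_add_cost_sub h hP hq hP''
  refine ⟨P, ⟨hP, ⟨c, -(c * t_f), fun t ht => by rw [hP'' t ht]; ring, by ring⟩, fun q hq => ?_⟩,
    fun p' ⟨hp', _, hmin⟩ => ?_⟩
  · linarith [hsplit q hq, cost_nonneg h.le (q - P)]
  · have hzero : Cost t₀ t_f (p' - P) = 0 :=
      le_antisymm (by linarith [hsplit p' hp', hmin P hP]) (cost_nonneg h.le _)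
    obtain ⟨hw, hw₀, hw₁, -⟩ := hp'.sub h hP
    exact fun t ht => sub_eq_zero.1 (eqOn_zero_of_cost_eq_zero h hw hw₀ hw₁ hzero ht)
end

section
/- If p, q : [t₀, t_f] → ℝ are C² with equal values of p(t₀), p'(t₀), p(t_f) and p'' is affine with p''(t_f) = 0, then (1/2)∫(q'')² ≥ (1/2)∫(p'')², with equality iff q'' = p'' on [t₀, t_f]. -/
/-!
Write `q'' = p'' + (q'' - p'')`. Two integrations by parts, using `p''(t_f) = 0`, `p''' = const`
and the vanishing of `q - p` at `t₀`, `t_f` and of `q' - p'` at `t₀`, show that `p''` is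
$L^2$-orthogonal to `q'' - p''`. Hence `∫ (q'')² = ∫ (p'')² + ∫ (q'' - p'')²`, and by continuity
the last integral vanishes exactly when `q'' = p''` on `[t₀, t_f]`.
-/

open Set MeasureTheory intervalIntegral Interval

section Pythagoras

variable {f g : ℝ → ℝ} {a b : ℝ}

theorem integral_sq_eq_add_integral_sq_sub_of_integral_mul_sub_eq_zero
    (hf : ContinuousOn f [[a, b]]) (hg : ContinuousOn g [[a, b]])
    (horth : ∫ t in a..b, g t * (f t - g t) = 0) :
    ∫ t in a..b, f t ^ 2 = (∫ t in a..b, g t ^ 2) + ∫ t in a..b, (f t - g t) ^ 2 := by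
  have hg2 : IntervalIntegrable (fun t ↦ g t ^ 2) volume a b := (hg.pow 2).intervalIntegrable
  have hcross : IntervalIntegrable (fun t ↦ 2 * (g t * (f t - g t))) volume a b :=
    ((hg.mul (hf.sub hg)).intervalIntegrable).const_mul 2
  have hd2 : IntervalIntegrable (fun t ↦ (f t - g t) ^ 2) volume a b :=
    ((hf.sub hg).pow 2).intervalIntegrable
  calc ∫ t in a..b, f t ^ 2
      = ∫ t in a..b, (g t ^ 2 + 2 * (g t * (f t - g t)) + (f t - g t) ^ 2) := by
        congr 1; ext t; ring
    _ = (∫ t in a..b, g t ^ 2) + ∫ t in a..b, (f t - g t) ^ 2 := by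
        rw [integral_add (hg2.add hcross) hd2, integral_add hg2 hcross,
          intervalIntegral.integral_const_mul, horth, mul_zero, add_zero]

theorem integral_sq_sub_eq_zero_iff_eqOn (hab : a < b) (hf : ContinuousOn f (Icc a b))
    (hg : ContinuousOn g (Icc a b)) :
    ∫ t in a..b, (f t - g t) ^ 2 = 0 ↔ EqOn f g (Icc a b) := by
  constructor
  · intro hzero x hx
    by_contra hne
    have hpos : 0 < ∫ t in a..b, (f t - g t) ^ 2 :=
      integral_pos hab ((hf.sub hg).pow 2) (fun _ _ ↦ sq_nonneg _)
        ⟨x, hx, sq_pos_of_ne_zero (sub_ne_zero.mpr hne)⟩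
    exact hpos.ne' hzero
  · intro hfg
    rw [integral_congr (g := fun _ ↦ (0 : ℝ)), intervalIntegral.integral_zero]
    intro t ht
    rw [uIcc_of_le hab.le] at ht
    simp [hfg ht]

theorem integral_sq_le_and_eq_iff_eqOn_of_integral_mul_sub_eq_zero (hab : a < b)
    (hf : ContinuousOn f (Icc a b)) (hg : ContinuousOn g (Icc a b))
    (horth : ∫ t in a..b, g t * (f t - g t) = 0) :
    ∫ t in a..b, g t ^ 2 ≤ ∫ t in a..b, f t ^ 2 ∧
      (∫ t in a..b, f t ^ 2 = ∫ t in a..b, g t ^ 2 ↔ EqOn f g (Icc a b)) := by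
  have hsplit := integral_sq_eq_add_integral_sq_sub_of_integral_mul_sub_eq_zero
    (uIcc_of_le hab.le ▸ hf) (uIcc_of_le hab.le ▸ hg) horth
  have hnonneg : 0 ≤ ∫ t in a..b, (f t - g t) ^ 2 :=
    integral_nonneg hab.le fun _ _ ↦ sq_nonneg _
  rw [hsplit, ← integral_sq_sub_eq_zero_iff_eqOn hab hf hg]
  constructor
  · linarith
  · constructor <;> intro hE <;> linarith

end Pythagoras

theorem integral_mul_eq_of_hasDerivAt_const {u u' u'' v : ℝ → ℝ} {a b α : ℝ}
    (hu : ∀ t ∈ [[a, b]], HasDerivAt u (u' t) t) (hu' : ∀ t ∈ [[a, b]], HasDerivAt u' (u'' t) t)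
    (hu'' : IntervalIntegrable u'' volume a b) (hv : ∀ t ∈ [[a, b]], HasDerivAt v α t) :
    ∫ t in a..b, v t * u'' t = v b * u' b - v a * u' a - α * (u b - u a) := by
  have hu'_int : IntervalIntegrable u' volume a b :=
    ContinuousOn.intervalIntegrable fun t ht ↦ (hu' t ht).continuousAt.continuousWithinAt
  rw [integral_mul_deriv_eq_deriv_mul hv hu' intervalIntegrable_const hu'',
    intervalIntegral.integral_const_mul, integral_eq_sub_of_hasDerivAt hu hu'_int]

theorem stmt_4 (t₀ t_f a c : ℝ) (p q : ℝ → ℝ) (h : t₀ < t_f)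
    (hp : ContDiff ℝ 2 p) (hq : ContDiff ℝ 2 q)
    (h0 : p t₀ = q t₀) (h0' : deriv p t₀ = deriv q t₀)
    (hf : p t_f = q t_f)
    (haff : ∀ t : ℝ, deriv (deriv p) t = a * t + c)
    (hzero : a * t_f + c = 0) :
    (1/2) * ∫ t in t₀..t_f, (deriv (deriv p) t)^2
      ≤ (1/2) * ∫ t in t₀..t_f, (deriv (deriv q) t)^2 ∧
    ((1/2) * ∫ t in t₀..t_f, (deriv (deriv q) t)^2
        = (1/2) * ∫ t in t₀..t_f, (deriv (deriv p) t)^2 ↔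
      Set.EqOn (deriv (deriv q)) (deriv (deriv p)) (Set.Icc t₀ t_f)) := by
  have hp'' : Continuous (deriv (deriv p)) := by fun_prop
  have hq'' : Continuous (deriv (deriv q)) := by fun_prop
  have horth :
      ∫ t in t₀..t_f, deriv (deriv p) t * (deriv (deriv q) t - deriv (deriv p) t) = 0 := by
    have hp''' : ∀ t, HasDerivAt (deriv (deriv p)) a t := fun t ↦ by
      rw [show deriv (deriv p) = fun t ↦ a * t + c from funext haff]
      simpa using ((hasDerivAt_id t).const_mul a).add_const c
    rw [integral_mul_eq_of_hasDerivAt_const (u := q - p) (u' := deriv q - deriv p)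
      (fun t _ ↦ (hq.differentiable two_ne_zero t).hasDerivAt.sub
        (hp.differentiable two_ne_zero t).hasDerivAt)
      (fun t _ ↦ (hq.differentiable_deriv_two t).hasDerivAt.sub
        (hp.differentiable_deriv_two t).hasDerivAt)
      ((hq''.sub hp'').intervalIntegrable _ _) (fun t _ ↦ hp''' t)]
    simp [haff, hzero, h0, h0', hf]
  obtain ⟨hle, heq⟩ := integral_sq_le_and_eq_iff_eqOn_of_integral_mul_sub_eq_zero h
    hq''.continuousOn hp''.continuousOn horth
  exact ⟨by linarith, (mul_right_inj' one_half_pos.ne').trans heq⟩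
end
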